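/- arXiv:2310.19021 — 3 statements merged into one kernel-verified Lean document; each statement's English description precedes it below -/
import Mathlib

section
/- Let V, A_1,…,A_m, c, n, H, Ric, Θ_p be as in the setting, with n ≥ 4. Assume that Ric(X) > (n−2)(c+H²) for every unit vector X ∈ V. Then for every integer p with 2 ≤ p ≤ n/2 and every orthonormal basis e_1,…,e_n of V one has Θ_p < p(n−p)c. (Strict case of Proposition 2, part (i).) -/
open scoped RealInnerProductSpace

/-- The Ricci curvature at a point of a submanifold, expressed through the shape
operators `A_α` via the Gauss equation: for a unit vector `X`,
`Ric X = (n-1)c + Σ_α tr(A_α)⟨A_α X, X⟩ − Σ_α ‖A_α X‖²`. -/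
noncomputable def RicCurv {V : Type*} [NormedAddCommGroup V] [InnerProductSpace ℝ V]
    (m n : ℕ) (c : ℝ) (A : Fin m → V →ₗ[ℝ] V) (X : V) : ℝ :=
  ((n : ℝ) - 1) * c + (∑ α : Fin m, LinearMap.trace ℝ V (A α) * ⟪(A α) X, X⟫)
    - ∑ α : Fin m, ‖(A α) X‖ ^ 2

/-- The Lawson–Simons quantity `Θ_p` associated to an orthonormal basis
`e_1, …, e_n` and an integer `p`:
`Θ_p = Σ_{i≤p} Σ_{j>p} (2 Σ_α ⟨A_α e_i, e_j⟩² − Σ_α ⟨A_α e_i, e_i⟩⟨A_α e_j, e_j⟩)`. -/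
noncomputable def Theta {V : Type*} [NormedAddCommGroup V] [InnerProductSpace ℝ V]
    (m : ℕ) {n : ℕ} (p : ℕ) (A : Fin m → V →ₗ[ℝ] V)
    (e : OrthonormalBasis (Fin n) ℝ V) : ℝ :=
  ∑ i ∈ Finset.univ.filter (fun i : Fin n => (i : ℕ) < p),
    ∑ j ∈ Finset.univ.filter (fun j : Fin n => p ≤ (j : ℕ)),
      (2 * ∑ α : Fin m, ⟪(A α) (e i), e j⟫ ^ 2
        - ∑ α : Fin m, ⟪(A α) (e i), e i⟫ * ⟪(A α) (e j), e j⟫)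

/-- The quantity `T_p = Σ_α (tr A_α) Σ_{i≤p} ⟨A_α e_i, e_i⟩`. -/
noncomputable def Tsum {V : Type*} [NormedAddCommGroup V] [InnerProductSpace ℝ V]
    (m : ℕ) {n : ℕ} (p : ℕ) (A : Fin m → V →ₗ[ℝ] V)
    (e : OrthonormalBasis (Fin n) ℝ V) : ℝ :=
  ∑ α : Fin m, LinearMap.trace ℝ V (A α) *
    ∑ i ∈ Finset.univ.filter (fun i : Fin n => (i : ℕ) < p), ⟪(A α) (e i), e i⟫

/-- The squared length `S = Σ_α tr(A_α²)` of the second fundamental form. -/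
noncomputable def Ssec {V : Type*} [NormedAddCommGroup V] [InnerProductSpace ℝ V]
    (m : ℕ) (A : Fin m → V →ₗ[ℝ] V) : ℝ :=
  ∑ α : Fin m, LinearMap.trace ℝ V (A α ∘ₗ A α)

/-!
Split the basis into the block `S = {e_1, …, e_p}` and its complement, of size `q = n - p`,
and write `t_α, r_α` for the partial traces of `A_α` over the two blocks. Summing the pinching
`Ric > (n - 2)(c + H²)` over each block, and assuming `Θ_p ≥ pqc`, gives two linear inequalities
in `P = Σ t_α²`, `Q = Σ r_α²`, `R = Σ t_α r_α` (using `n²H² = P + 2R + Q` and the block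
Cauchy–Schwarz bounds). A positive combination of them yields `2pqR > q²P + p²Q`, which
contradicts `R² ≤ PQ` by AM–GM.
-/

section BlockInequalities

variable {p q c H P Q R u x z : ℝ}

lemma block_bound_of_ricci (hp : 0 < p) (hq : 2 ≤ q) (hu : 0 ≤ u) (hx : P ≤ p * x)
    (hRic : p * (p + q - 2) * (c + H) < p * (p + q - 1) * c + (P + R) - (x + u))
    (hΘ : p * q * c ≤ 2 * u - R) :
    p ^ 2 * q * (p + q - 2) * H < q * (p - 1) * P + p * (q - 1) * R := by
  nlinarith [mul_le_mul_of_nonneg_left hx (by linarith : 0 ≤ q),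
    mul_nonneg (mul_nonneg hp.le (by linarith : 0 ≤ q - 2)) hu,
    mul_lt_mul_of_pos_left hRic (by positivity : 0 < p * q)]

lemma false_of_block_bounds (hp : 2 ≤ p) (hq : 2 ≤ q) (hP : 0 ≤ P) (hQ : 0 ≤ Q)
    (hR : R ^ 2 ≤ P * Q) (hH : (p + q) ^ 2 * H = P + 2 * R + Q)
    (h₁ : p ^ 2 * q * (p + q - 2) * H < q * (p - 1) * P + p * (q - 1) * R)
    (h₂ : q ^ 2 * p * (q + p - 2) * H < p * (q - 1) * Q + q * (p - 1) * R) : False := by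
  set s₁ := p * (p + q - 3) + q
  set s₂ := q * (p + q - 3) + p
  -- With these weights, once `H` is eliminated through `hH`, only a multiple of `(q - p) ^ 2`
  -- survives.
  have key : (q - p) ^ 2 * (2 * p * q * R - q ^ 2 * P - p ^ 2 * Q) =
      (p + q) * (q * s₁ * (q * (p - 1) * P + p * (q - 1) * R - p ^ 2 * q * (p + q - 2) * H)
        + p * s₂ * (p * (q - 1) * Q + q * (p - 1) * R - q ^ 2 * p * (q + p - 2) * H)) := by
    linear_combination p ^ 2 * q ^ 2 * (p + q - 2) ^ 2 * hH
  have hs₁ : 0 < s₁ := by nlinarith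
  have hs₂ : 0 < s₂ := by nlinarith
  have hpos : 0 < (q - p) ^ 2 * (2 * p * q * R - q ^ 2 * P - p ^ 2 * Q) := by
    have hg₁ := sub_pos.2 h₁
    have hg₂ := sub_pos.2 h₂
    rw [key]
    positivity
  have hAMGM : q ^ 2 * P + p ^ 2 * Q < 2 * p * q * R := by
    nlinarith [sq_nonneg (q - p)]
  nlinarith [sq_nonneg (q ^ 2 * P - p ^ 2 * Q),
    mul_le_mul_of_nonneg_left hR (by positivity : (0:ℝ) ≤ 4 * p ^ 2 * q ^ 2),
    mul_nonneg (sq_nonneg q) hP, mul_nonneg (sq_nonneg p) hQ]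

lemma two_mul_sub_lt_of_block_ricci (hp : 2 ≤ p) (hq : 2 ≤ q) (hu : 0 ≤ u)
    (hP : 0 ≤ P) (hQ : 0 ≤ Q) (hR : R ^ 2 ≤ P * Q) (hx : P ≤ p * x) (hz : Q ≤ q * z)
    (hH : (p + q) ^ 2 * H = P + 2 * R + Q)
    (h₁ : p * (p + q - 2) * (c + H) < p * (p + q - 1) * c + (P + R) - (x + u))
    (h₂ : q * (q + p - 2) * (c + H) < q * (q + p - 1) * c + (Q + R) - (z + u)) :
    2 * u - R < p * q * c := by
  by_contra! hΘ
  exact false_of_block_bounds hp hq hP hQ hR hH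
    (block_bound_of_ricci (by linarith) hq hu hx h₁ hΘ)
    (block_bound_of_ricci (by linarith) hp hu hz h₂ (by linarith))

end BlockInequalities

open Finset

section Blocks

variable {V ι : Type*} [NormedAddCommGroup V] [InnerProductSpace ℝ V] [Fintype ι]
  {m : ℕ} (A : Fin m → V →ₗ[ℝ] V) (e : OrthonormalBasis ι ℝ V)

noncomputable def partialTrace (S : Finset ι) (α : Fin m) : ℝ :=
  ∑ i ∈ S, ⟪A α (e i), e i⟫

noncomputable def blockSqSum (S T : Finset ι) : ℝ :=
  ∑ α, ∑ i ∈ S, ∑ j ∈ T, ⟪A α (e i), e j⟫ ^ 2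

lemma blockSqSum_comm (hA : ∀ α, (A α).IsSymmetric) (S T : Finset ι) :
    blockSqSum A e S T = blockSqSum A e T S := by
  refine sum_congr rfl fun α _ => ?_
  rw [sum_comm]
  refine sum_congr rfl fun j _ => sum_congr rfl fun i _ => ?_
  rw [hA α, real_inner_comm]

lemma sum_sq_partialTrace_le (S : Finset ι) :
    ∑ α, partialTrace A e S α ^ 2 ≤ #S * blockSqSum A e S S := by
  rw [blockSqSum, mul_sum]
  refine sum_le_sum fun α _ => sq_sum_le_card_mul_sum_sq.trans ?_
  gcongr with i hi
  exact single_le_sum (f := fun j => ⟪A α (e i), e j⟫ ^ 2) (fun _ _ => sq_nonneg _) hi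

variable [DecidableEq ι]

lemma trace_eq_partialTrace_add_compl (S : Finset ι) (α : Fin m) :
    LinearMap.trace ℝ V (A α) = partialTrace A e S α + partialTrace A e Sᶜ α := by
  simp only [LinearMap.trace_eq_sum_inner _ e, partialTrace, sum_add_sum_compl, real_inner_comm]

lemma sum_sum_norm_sq_eq_blockSqSum (S : Finset ι) :
    ∑ i ∈ S, ∑ α, ‖A α (e i)‖ ^ 2 = blockSqSum A e S S + blockSqSum A e S Sᶜ := by
  simp only [blockSqSum, ← sum_add_distrib, sum_add_sum_compl, OrthonormalBasis.sum_sq_inner_left]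
  exact sum_comm

lemma sum_ricCurv_eq (n : ℕ) (c : ℝ) (S : Finset ι) :
    ∑ i ∈ S, RicCurv m n c A (e i) = #S * ((n - 1) * c)
      + ∑ α, LinearMap.trace ℝ V (A α) * partialTrace A e S α
      - (blockSqSum A e S S + blockSqSum A e S Sᶜ) := by
  rw [← sum_sum_norm_sq_eq_blockSqSum]
  simp only [RicCurv, sum_sub_distrib, sum_add_distrib, sum_const, nsmul_eq_mul,
    partialTrace, mul_sum]
  rw [sum_comm (s := S)]

theorem two_mul_blockSqSum_sub_lt (hA : ∀ α, (A α).IsSymmetric) {n : ℕ}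
    (hn : Fintype.card ι = n) {c H : ℝ}
    (hHdef : (n : ℝ) ^ 2 * H ^ 2 = ∑ α, (LinearMap.trace ℝ V (A α)) ^ 2)
    (hRic : ∀ X : V, ‖X‖ = 1 → RicCurv m n c A X > ((n : ℝ) - 2) * (c + H ^ 2))
    {S : Finset ι} (hS : 2 ≤ #S) (hSc : 2 ≤ #Sᶜ) :
    2 * blockSqSum A e S Sᶜ - ∑ α, partialTrace A e S α * partialTrace A e Sᶜ α
      < #S * #Sᶜ * c := by
  have hn' : (n : ℝ) = #S + #Sᶜ := by rw [← hn, ← card_add_card_compl S]; push_cast; rfl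
  have hRic_sum (T : Finset ι) (hT : T.Nonempty) :
      #T * (((n : ℝ) - 2) * (c + H ^ 2)) < ∑ i ∈ T, RicCurv m n c A (e i) := by
    simpa using sum_lt_sum_of_nonempty hT fun i _ => hRic (e i) (e.orthonormal.1 i)
  have h₁ := hRic_sum S (card_pos.1 (by omega))
  have h₂ := hRic_sum Sᶜ (card_pos.1 (by omega))
  rw [sum_ricCurv_eq] at h₁ h₂
  rw [compl_compl, blockSqSum_comm A e hA Sᶜ S] at h₂
  set t := partialTrace A e S
  set r := partialTrace A e Sᶜ
  have htr (α : Fin m) : LinearMap.trace ℝ V (A α) = t α + r α :=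
    trace_eq_partialTrace_add_compl A e S α
  have hmid₁ : ∑ α, LinearMap.trace ℝ V (A α) * t α = ∑ α, t α ^ 2 + ∑ α, t α * r α := by
    simp only [htr, ← sum_add_distrib]
    exact sum_congr rfl fun α _ => by ring
  have hmid₂ : ∑ α, LinearMap.trace ℝ V (A α) * r α = ∑ α, r α ^ 2 + ∑ α, t α * r α := by
    simp only [htr, ← sum_add_distrib]
    exact sum_congr rfl fun α _ => by ring
  have hH : ((#S : ℝ) + #Sᶜ) ^ 2 * H ^ 2
      = ∑ α, t α ^ 2 + 2 * ∑ α, t α * r α + ∑ α, r α ^ 2 := by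
    simp only [← hn', hHdef, htr, mul_sum, ← sum_add_distrib]
    exact sum_congr rfl fun α _ => by ring
  refine two_mul_sub_lt_of_block_ricci (by exact_mod_cast hS) (by exact_mod_cast hSc)
    (sum_nonneg fun _ _ => sum_nonneg fun _ _ => sum_nonneg fun _ _ => sq_nonneg _)
    (sum_nonneg fun _ _ => sq_nonneg _) (sum_nonneg fun _ _ => sq_nonneg _)
    (sum_mul_sq_le_sq_mul_sq _ t r) (sum_sq_partialTrace_le A e S)
    (sum_sq_partialTrace_le A e Sᶜ) hH ?_ ?_
  · rw [hmid₁, hn'] at h₁; linarith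
  · rw [hmid₂, hn'] at h₂; linarith

end Blocks

lemma theta_eq_two_mul_blockSqSum_sub {V : Type*} [NormedAddCommGroup V]
    [InnerProductSpace ℝ V] {m n : ℕ} (p : ℕ) (A : Fin m → V →ₗ[ℝ] V)
    (e : OrthonormalBasis (Fin n) ℝ V) :
    let I := univ.filter fun i : Fin n => (i : ℕ) < p
    Theta m p A e =
      2 * blockSqSum A e I Iᶜ - ∑ α, partialTrace A e I α * partialTrace A e Iᶜ α := by
  intro I
  have hcompl : Iᶜ = univ.filter fun j : Fin n => p ≤ (j : ℕ) := by
    ext; simp [I]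
  rw [hcompl, Theta, blockSqSum]
  simp only [partialTrace, sum_mul_sum]
  simp only [mul_sum, ← sum_sub_distrib]
  rw [sum_comm (s := univ)]
  exact sum_congr rfl fun i _ => sum_comm

theorem ricci_pinched_theta_lt_general {V : Type*} [NormedAddCommGroup V] [InnerProductSpace ℝ V]
    (n m : ℕ)
    (A : Fin m → V →ₗ[ℝ] V) (hsymm : ∀ α : Fin m, (A α).IsSymmetric)
    (c H : ℝ)
    (hHdef : (n : ℝ) ^ 2 * H ^ 2 = ∑ α : Fin m, (LinearMap.trace ℝ V (A α)) ^ 2)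
    (hRic : ∀ X : V, ‖X‖ = 1 → RicCurv m n c A X > ((n : ℝ) - 2) * (c + H ^ 2)) :
    ∀ p : ℕ, 2 ≤ p → 2 * p ≤ n → ∀ e : OrthonormalBasis (Fin n) ℝ V,
      Theta m p A e < (p : ℝ) * ((n : ℝ) - p) * c := by
  intro p hp hpn e
  set I := univ.filter fun i : Fin n => (i : ℕ) < p
  have hI : #I = p := by simp only [I, Fin.card_filter_val_lt]; omega
  have hIc : #Iᶜ = n - p := by rw [card_compl, Fintype.card_fin, hI]
  have hΘ := two_mul_blockSqSum_sub_lt A e hsymm (Fintype.card_fin n) hHdef hRic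
    (S := I) (by omega) (by omega)
  rwa [hI, hIc, Nat.cast_sub (by omega), ← theta_eq_two_mul_blockSqSum_sub] at hΘ

theorem ricci_pinched_theta_lt {V : Type*} [NormedAddCommGroup V] [InnerProductSpace ℝ V]
    [FiniteDimensional ℝ V] (n m : ℕ)
    (hdim : Module.finrank ℝ V = n)
    (A : Fin m → V →ₗ[ℝ] V) (hsymm : ∀ α : Fin m, (A α).IsSymmetric)
    (c H : ℝ) (hH : 0 ≤ H)
    (hHdef : (n : ℝ) ^ 2 * H ^ 2 = ∑ α : Fin m, (LinearMap.trace ℝ V (A α)) ^ 2)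
    (hn : 4 ≤ n)
    (hRic : ∀ X : V, ‖X‖ = 1 → RicCurv m n c A X > ((n : ℝ) - 2) * (c + H ^ 2)) :
    ∀ p : ℕ, 2 ≤ p → 2 * p ≤ n → ∀ e : OrthonormalBasis (Fin n) ℝ V,
      Theta m p A e < (p : ℝ) * ((n : ℝ) - p) * c :=
  ricci_pinched_theta_lt_general n m A hsymm c H hHdef hRic
end

section
/- Let V, A_1,…,A_m, c, n, H, Ric, Θ_p be as in the setting, with n ≥ 4. Assume Ric(X) ≥ (n−2)(c+H²) for every unit vector X ∈ V, and that for some integer p with 2 ≤ p ≤ n/2 and some orthonormal basis e_1,…,e_n of V equality Θ_p = p(n−p)c holds. Then for every α ∈ {1,…,m}: ⟨A_α e_i, e_i⟩ = ⟨A_α e_1, e_1⟩ for all 1 ≤ i ≤ p, and ⟨A_α e_i, e_{i'}⟩ = 0 for all 1 ≤ i ≠ i' ≤ p. (Equations (13) and (15) in the proof of Proposition 2.) -/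
open scoped RealInnerProductSpace

/-!
Write `h α i j = ⟪A α (e i), e j⟫` and split the basis into the first `p` vectors and the
remaining `q = n - p`. Summing the Ricci bound over each of the two blocks and adding the two
sums with suitable positive weights, the equality `Θ_p = p q c` and `n² H² = Σ (tr A_α)²` make
`c` and `H²` cancel. What is left says that a sum of nonnegative terms is `≤ 0`: the mixed
entries, a square, the Cauchy–Schwarz defect of the second block, and the defect
`p Σ_{i,k ≤ p} (h α i k)² - (Σ_{i ≤ p} h α i i)²` of the first block. The vanishing of the last
one says exactly that the first `p × p` block of every `A_α` is a multiple of the identity.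
-/

open Finset

section

variable {ι κ : Type*}

/-- Weights for the Ricci bounds summed over a block of size `p` and over its complement of size
`q`, chosen so that `c` and `H²` cancel and what remains is a sum of nonnegative terms. -/
noncomputable def ricciWeight (p q : ℝ) : ℝ :=
  q * (q + p * (p + q - 3)) / ((p + q) * (p + q - 2))

lemma ricciWeight_pos {p q : ℝ} (hp : 0 < p) (hq : 0 < q) (hn : 3 ≤ p + q) :
    0 < ricciWeight p q := by
  have : 0 ≤ p * (p + q - 3) := mul_nonneg hp.le (by linarith)
  exact div_pos (by positivity) (mul_pos (by linarith) (by linarith))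

lemma ricciWeight_mul_add_ricciWeight_mul {p q : ℝ} (hn : p + q ≠ 0) (hn2 : p + q - 2 ≠ 0) :
    ricciWeight p q * p + ricciWeight q p * q = p * q := by
  unfold ricciWeight
  rw [add_comm q p]
  field_simp
  ring

lemma two_le_ricciWeight_add {p q : ℝ} (hp : 1 ≤ p) (hq : 1 ≤ q) (hn : 4 ≤ p + q) :
    2 ≤ ricciWeight p q + ricciWeight q p := by
  unfold ricciWeight
  rw [add_comm q p, ← add_div, le_div_iff₀ (mul_pos (by linarith) (by linarith))]
  nlinarith [mul_nonneg (mul_nonneg (sub_nonneg.2 hp) (sub_nonneg.2 hq)) (sub_nonneg.2 hn)]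

lemma ricciWeight_mul_sub_div_le {p q B C Q S U : ℝ} (hp : 1 ≤ p) (hq : 1 ≤ q)
    (hn : 4 ≤ p + q) (hQ : 0 ≤ Q) (hU : U ^ 2 ≤ q * C) :
    ricciWeight p q * (B - S ^ 2 / p) ≤
      ricciWeight p q * (B + Q - (S + U) * S) + ricciWeight q p * (C + Q - (S + U) * U)
        - (2 * Q - S * U) + p * q * (p + q - 2) / (p + q) ^ 2 * (S + U) ^ 2 := by
  have hsos : ricciWeight p q * (B + Q - (S + U) * S) + ricciWeight q p * (C + Q - (S + U) * U)
        - (2 * Q - S * U) + p * q * (p + q - 2) / (p + q) ^ 2 * (S + U) ^ 2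
        - ricciWeight p q * (B - S ^ 2 / p)
      = (ricciWeight p q + ricciWeight q p - 2) * Q + ricciWeight q p * (C - U ^ 2 / q)
        + (q - p) ^ 2 / (p * q * (p + q) ^ 2 * (p + q - 2)) * (q * S - p * U) ^ 2 := by
    unfold ricciWeight
    rw [add_comm q p]
    have : p + q - 2 ≠ 0 := by linarith
    field_simp
    ring
  have hp0 : 0 < p := by linarith
  have hq0 : 0 < q := by linarith
  have hn2 : 0 < p + q - 2 := by linarith
  have hC : 0 ≤ C - U ^ 2 / q := by rw [sub_nonneg, div_le_iff₀' hq0]; exact hU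
  have hsq : 0 ≤ (q - p) ^ 2 / (p * q * (p + q) ^ 2 * (p + q - 2)) * (q * S - p * U) ^ 2 := by
    positivity
  linarith [mul_nonneg (sub_nonneg.2 (two_le_ricciWeight_add hp hq hn)) hQ,
    mul_nonneg (ricciWeight_pos hq0 hp0 (by linarith)).le hC]

/-- Read `S α`, `U α` as the traces of the two diagonal blocks of the `α`-th shape operator,
`B α`, `C α` as their squared norms and `Q α` as the squared norm of the off-diagonal block. -/
lemma sum_ricciWeight_mul_sub_div_nonpos [Fintype κ] {p q c H : ℝ} {B C Q S U : κ → ℝ}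
    (hp : 1 ≤ p) (hq : 1 ≤ q) (hn : 4 ≤ p + q) (hU : ∀ α, U α ^ 2 ≤ q * C α)
    (hQ : ∀ α, 0 ≤ Q α) (hH : (p + q) ^ 2 * H ^ 2 = ∑ α, (S α + U α) ^ 2)
    (hRicS : p * ((p + q - 2) * (c + H ^ 2))
      ≤ p * ((p + q - 1) * c) + ∑ α, (S α + U α) * S α - ∑ α, (B α + Q α))
    (hRicU : q * ((p + q - 2) * (c + H ^ 2))
      ≤ q * ((p + q - 1) * c) + ∑ α, (S α + U α) * U α - ∑ α, (C α + Q α))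
    (hΘ : ∑ α, (2 * Q α - S α * U α) = p * q * c) :
    ∑ α, ricciWeight p q * (B α - S α ^ 2 / p) ≤ 0 := by
  set a := ricciWeight p q
  set b := ricciWeight q p
  set d := p * q * (p + q - 2) / (p + q) ^ 2
  have ha : 0 < a := ricciWeight_pos (by linarith) (by linarith) (by linarith)
  have hb : 0 < b := ricciWeight_pos (by linarith) (by linarith) (by linarith)
  calc ∑ α, a * (B α - S α ^ 2 / p)
      ≤ ∑ α, (a * (B α + Q α - (S α + U α) * S α) + b * (C α + Q α - (S α + U α) * U α)
          - (2 * Q α - S α * U α) + d * (S α + U α) ^ 2) :=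
        sum_le_sum fun α _ => ricciWeight_mul_sub_div_le hp hq hn (hQ α) (hU α)
    _ = a * (∑ α, (B α + Q α) - ∑ α, (S α + U α) * S α)
          + b * (∑ α, (C α + Q α) - ∑ α, (S α + U α) * U α)
          - ∑ α, (2 * Q α - S α * U α) + d * ∑ α, (S α + U α) ^ 2 := by
        simp only [sum_add_distrib, sum_sub_distrib, mul_sum, mul_sub, mul_add]
    _ ≤ a * (p * c - p * (p + q - 2) * H ^ 2) + b * (q * c - q * (p + q - 2) * H ^ 2)
          - p * q * c + d * ((p + q) ^ 2 * H ^ 2) := by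
        rw [hΘ, hH]
        have := mul_le_mul_of_nonneg_left (show ∑ α, (B α + Q α) - ∑ α, (S α + U α) * S α
          ≤ p * c - p * (p + q - 2) * H ^ 2 by linarith) ha.le
        have := mul_le_mul_of_nonneg_left (show ∑ α, (C α + Q α) - ∑ α, (S α + U α) * U α
          ≤ q * c - q * (p + q - 2) * H ^ 2 by linarith) hb.le
        linarith
    _ = 0 := by
        have hw := ricciWeight_mul_add_ricciWeight_mul (p := p) (q := q) (by linarith)
          (by linarith)
        have : p + q ≠ 0 := by linarith
        simp only [d]
        field_simp
        linear_combination (c - (p + q - 2) * H ^ 2) * hw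

lemma mul_eq_sq_of_ricci_pinching [Fintype κ] {p q c H : ℝ} {B C Q S U : κ → ℝ}
    (hp : 1 ≤ p) (hq : 1 ≤ q) (hn : 4 ≤ p + q)
    (hS : ∀ α, S α ^ 2 ≤ p * B α) (hU : ∀ α, U α ^ 2 ≤ q * C α) (hQ : ∀ α, 0 ≤ Q α)
    (hH : (p + q) ^ 2 * H ^ 2 = ∑ α, (S α + U α) ^ 2)
    (hRicS : p * ((p + q - 2) * (c + H ^ 2))
      ≤ p * ((p + q - 1) * c) + ∑ α, (S α + U α) * S α - ∑ α, (B α + Q α))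
    (hRicU : q * ((p + q - 2) * (c + H ^ 2))
      ≤ q * ((p + q - 1) * c) + ∑ α, (S α + U α) * U α - ∑ α, (C α + Q α))
    (hΘ : ∑ α, (2 * Q α - S α * U α) = p * q * c) (α : κ) :
    p * B α = S α ^ 2 := by
  have hp0 : 0 < p := by linarith
  have ha : 0 < ricciWeight p q := ricciWeight_pos hp0 (by linarith) (by linarith)
  have hdefect : ∀ α, 0 ≤ ricciWeight p q * (B α - S α ^ 2 / p) := fun α =>
    mul_nonneg ha.le (sub_nonneg.2 ((div_le_iff₀' hp0).2 (hS α)))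
  have hα : ricciWeight p q * (B α - S α ^ 2 / p) = 0 :=
    (sum_eq_zero_iff_of_nonneg fun α _ => hdefect α).1 (le_antisymm
      (sum_ricciWeight_mul_sub_div_nonpos hp hq hn hU hQ hH hRicS hRicU hΘ)
      (sum_nonneg fun α _ => hdefect α)) α (mem_univ α)
  have := (mul_eq_zero.1 hα).resolve_left ha.ne'
  rw [sub_eq_zero, eq_div_iff hp0.ne'] at this
  linarith

def blockTrace (M : Matrix ι ι ℝ) (s : Finset ι) : ℝ := ∑ i ∈ s, M i i

def blockNormSq (M : Matrix ι ι ℝ) (s t : Finset ι) : ℝ :=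
  ∑ i ∈ s, ∑ j ∈ t, M i j ^ 2

lemma trace_eq_blockTrace_add_compl [Fintype ι] [DecidableEq ι]
    (M : Matrix ι ι ℝ) (s : Finset ι) : M.trace = blockTrace M s + blockTrace M sᶜ :=
  (sum_add_sum_compl s _).symm

lemma blockNormSq_comm {M : Matrix ι ι ℝ} (hM : M.IsSymm) (s t : Finset ι) :
    blockNormSq M t s = blockNormSq M s t := by
  unfold blockNormSq
  rw [sum_comm]
  simp_rw [hM.apply]

lemma blockNormSq_nonneg (M : Matrix ι ι ℝ) (s t : Finset ι) :
    0 ≤ blockNormSq M s t := by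
  unfold blockNormSq
  positivity

lemma sum_sq_sub_smul_one_block [DecidableEq ι] (M : Matrix ι ι ℝ) (s : Finset ι)
    (r : ℝ) : ∑ i ∈ s, ∑ k ∈ s, (M i k - (r • 1 : Matrix ι ι ℝ) i k) ^ 2
      = blockNormSq M s s - 2 * r * blockTrace M s + #s * r ^ 2 := by
  have hrow : ∀ i ∈ s, ∑ k ∈ s, (M i k - (r • 1 : Matrix ι ι ℝ) i k) ^ 2
      = ∑ k ∈ s, M i k ^ 2 - 2 * r * M i i + r ^ 2 := fun i hi => by
    simp only [Matrix.smul_apply, Matrix.one_apply, smul_eq_mul, mul_ite, mul_one, mul_zero,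
      sub_sq, sum_add_distrib, sum_sub_distrib, ite_pow, ne_eq, OfNat.ofNat_ne_zero,
      not_false_eq_true, zero_pow, sum_ite_eq, hi, if_true]
    ring
  rw [sum_congr rfl hrow, sum_add_distrib, sum_sub_distrib, ← mul_sum, sum_const, nsmul_eq_mul]
  rfl

lemma card_mul_blockNormSq_sub_sq_blockTrace [DecidableEq ι] (M : Matrix ι ι ℝ)
    (s : Finset ι) : #s * blockNormSq M s s - blockTrace M s ^ 2
      = #s * ∑ i ∈ s, ∑ k ∈ s, (M i k - ((blockTrace M s / #s) • 1 : Matrix ι ι ℝ) i k) ^ 2 := by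
  rw [sum_sq_sub_smul_one_block]
  rcases s.eq_empty_or_nonempty with rfl | hs
  · simp [blockTrace]
  have : (#s : ℝ) ≠ 0 := by exact_mod_cast hs.card_pos.ne'
  field_simp
  ring

lemma sq_blockTrace_le [DecidableEq ι] (M : Matrix ι ι ℝ) (s : Finset ι) :
    blockTrace M s ^ 2 ≤ #s * blockNormSq M s s := by
  have := card_mul_blockNormSq_sub_sq_blockTrace M s
  have : 0 ≤ #s * blockNormSq M s s - blockTrace M s ^ 2 := by rw [this]; positivity
  linarith

lemma block_eq_smul_one_of_card_mul_le [DecidableEq ι] {M : Matrix ι ι ℝ}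
    {s : Finset ι} (hs : s.Nonempty) (h : #s * blockNormSq M s s ≤ blockTrace M s ^ 2) :
    ∀ i ∈ s, ∀ k ∈ s, M i k = ((blockTrace M s / #s) • 1 : Matrix ι ι ℝ) i k := by
  have hcard : (0 : ℝ) < #s := by exact_mod_cast hs.card_pos
  have hzero : ∑ i ∈ s, ∑ k ∈ s,
      (M i k - ((blockTrace M s / #s) • 1 : Matrix ι ι ℝ) i k) ^ 2 = 0 := by
    have := card_mul_blockNormSq_sub_sq_blockTrace M s
    exact le_antisymm (nonpos_of_mul_nonpos_right (by linarith) hcard) (by positivity)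
  intro i hi k hk
  rw [sum_eq_zero_iff_of_nonneg fun _ _ => by positivity] at hzero
  have := (sum_eq_zero_iff_of_nonneg fun _ _ => by positivity).1 (hzero i hi) k hk
  exact sub_eq_zero.1 (pow_eq_zero_iff two_ne_zero |>.1 this)

noncomputable def gaussRicci [Fintype ι] [Fintype κ] (c : ℝ)
    (h : κ → Matrix ι ι ℝ) (i : ι) : ℝ :=
  (Fintype.card ι - 1) * c + ∑ α, (h α).trace * h α i i - ∑ α, ∑ k, h α i k ^ 2

def lawsonSimons [Fintype ι] [DecidableEq ι] [Fintype κ] (h : κ → Matrix ι ι ℝ)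
    (s : Finset ι) : ℝ :=
  ∑ i ∈ s, ∑ j ∈ sᶜ, (2 * ∑ α, h α i j ^ 2 - ∑ α, h α i i * h α j j)

lemma sum_gaussRicci [Fintype ι] [DecidableEq ι] [Fintype κ] (c : ℝ)
    (h : κ → Matrix ι ι ℝ) (s : Finset ι) :
    ∑ i ∈ s, gaussRicci c h i = #s * ((Fintype.card ι - 1) * c)
      + ∑ α, (h α).trace * blockTrace (h α) s
      - ∑ α, (blockNormSq (h α) s s + blockNormSq (h α) s sᶜ) := by
  have hrow : ∀ α i, ∑ k, h α i k ^ 2 = ∑ k ∈ s, h α i k ^ 2 + ∑ k ∈ sᶜ, h α i k ^ 2 :=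
    fun _ _ => (sum_add_sum_compl s _).symm
  simp only [gaussRicci, blockTrace, blockNormSq, hrow, sum_add_distrib, sum_sub_distrib,
    sum_const, nsmul_eq_mul, mul_sum, sum_comm (s := s) (t := (univ : Finset κ))]

lemma lawsonSimons_eq [Fintype ι] [DecidableEq ι] [Fintype κ]
    (h : κ → Matrix ι ι ℝ) (s : Finset ι) :
    lawsonSimons h s
      = ∑ α, (2 * blockNormSq (h α) s sᶜ - blockTrace (h α) s * blockTrace (h α) sᶜ) := by
  simp only [lawsonSimons, blockNormSq, blockTrace, sum_mul_sum]
  simp only [sum_sub_distrib, mul_sum, sum_comm (s := sᶜ) (t := (univ : Finset κ)),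
    sum_comm (s := s) (t := (univ : Finset κ))]

theorem card_mul_blockNormSq_eq_sq_blockTrace [Fintype ι] [DecidableEq ι]
    [Fintype κ] {h : κ → Matrix ι ι ℝ} (hsymm : ∀ α, (h α).IsSymm) {s : Finset ι}
    (hs : s.Nonempty) (hsc : sᶜ.Nonempty) (hn : 4 ≤ Fintype.card ι) {c H : ℝ}
    (hH : (Fintype.card ι : ℝ) ^ 2 * H ^ 2 = ∑ α, (h α).trace ^ 2)
    (hRic : ∀ i, ((Fintype.card ι : ℝ) - 2) * (c + H ^ 2) ≤ gaussRicci c h i)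
    (hΘ : lawsonSimons h s = #s * #sᶜ * c) (α : κ) :
    #s * blockNormSq (h α) s s = blockTrace (h α) s ^ 2 := by
  have hcard : (#s : ℝ) + #sᶜ = Fintype.card ι := by exact_mod_cast s.card_add_card_compl
  have hsum : ∀ t : Finset ι, #t * (((Fintype.card ι : ℝ) - 2) * (c + H ^ 2))
      ≤ ∑ i ∈ t, gaussRicci c h i := fun t => by
    simpa using card_nsmul_le_sum t _ _ fun i _ => hRic i
  have hRicS := hsum s
  have hRicU := hsum sᶜ
  simp only [sum_gaussRicci, compl_compl, trace_eq_blockTrace_add_compl _ s,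
    blockNormSq_comm (hsymm _) s sᶜ] at hRicS hRicU hH
  rw [← hcard] at hRicS hRicU hH
  rw [lawsonSimons_eq] at hΘ
  have hn' : (4 : ℝ) ≤ #s + #sᶜ := by rw [hcard]; exact_mod_cast hn
  exact mul_eq_sq_of_ricci_pinching (by exact_mod_cast hs.card_pos)
    (by exact_mod_cast hsc.card_pos) hn' (fun α => sq_blockTrace_le (h α) s)
    (fun α => sq_blockTrace_le (h α) sᶜ) (fun α => blockNormSq_nonneg _ _ _) hH hRicS hRicU hΘ α

section ShapeMatrix

variable {V : Type*} [NormedAddCommGroup V] [InnerProductSpace ℝ V]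

noncomputable def shapeMatrix [Fintype ι] (A : κ → V →ₗ[ℝ] V) (e : OrthonormalBasis ι ℝ V)
    (α : κ) : Matrix ι ι ℝ :=
  Matrix.of fun i j => ⟪A α (e i), e j⟫

lemma shapeMatrix_isSymm [Fintype ι] {A : κ → V →ₗ[ℝ] V} (e : OrthonormalBasis ι ℝ V) {α : κ}
    (hA : (A α).IsSymmetric) : (shapeMatrix A e α).IsSymm :=
  Matrix.IsSymm.ext fun i j => by
    simp only [shapeMatrix, Matrix.of_apply]
    rw [hA, real_inner_comm]

lemma trace_shapeMatrix [Fintype ι] (A : κ → V →ₗ[ℝ] V) (e : OrthonormalBasis ι ℝ V) (α : κ) :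
    (shapeMatrix A e α).trace = LinearMap.trace ℝ V (A α) := by
  simp [LinearMap.trace_eq_sum_inner _ e, Matrix.trace, shapeMatrix, real_inner_comm]

lemma RicCurv_eq_gaussRicci {m n : ℕ} (c : ℝ) (A : Fin m → V →ₗ[ℝ] V)
    (e : OrthonormalBasis (Fin n) ℝ V) (i : Fin n) :
    RicCurv m n c A (e i) = gaussRicci c (shapeMatrix A e) i := by
  simp only [gaussRicci, trace_shapeMatrix]
  simp [RicCurv, ← e.sum_sq_inner_left, shapeMatrix]

lemma Theta_eq_lawsonSimons {m n : ℕ} (p : ℕ) (A : Fin m → V →ₗ[ℝ] V)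
    (e : OrthonormalBasis (Fin n) ℝ V) :
    Theta m p A e = lawsonSimons (shapeMatrix A e) (univ.filter fun i : Fin n => (i : ℕ) < p) := by
  simp [Theta, lawsonSimons, compl_filter, shapeMatrix]

end ShapeMatrix

end

theorem ricci_pinched_equality_block_umbilic {V : Type*} [NormedAddCommGroup V] [InnerProductSpace ℝ V]
    (n m : ℕ)
    (A : Fin m → V →ₗ[ℝ] V) (hsymm : ∀ α : Fin m, (A α).IsSymmetric)
    (c H : ℝ)
    (hHdef : (n : ℝ) ^ 2 * H ^ 2 = ∑ α : Fin m, (LinearMap.trace ℝ V (A α)) ^ 2)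
    (hn : 4 ≤ n)
    (hRic : ∀ X : V, ‖X‖ = 1 → RicCurv m n c A X ≥ ((n : ℝ) - 2) * (c + H ^ 2))
    (p : ℕ) (hp1 : 2 ≤ p) (hp2 : 2 * p ≤ n)
    (e : OrthonormalBasis (Fin n) ℝ V)
    (heq : Theta m p A e = (p : ℝ) * ((n : ℝ) - p) * c) :
    ∀ α : Fin m,
      (∀ i : Fin n, (i : ℕ) < p →
        ⟪(A α) (e i), e i⟫ = ⟪(A α) (e ⟨0, by omega⟩), e ⟨0, by omega⟩⟫) ∧
      (∀ i i' : Fin n, (i : ℕ) < p → (i' : ℕ) < p → i ≠ i' →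
        ⟪(A α) (e i), e i'⟫ = 0) := by
  set s := univ.filter fun i : Fin n => (i : ℕ) < p
  have hmem : ∀ i : Fin n, (i : ℕ) < p → i ∈ s := by simp [s]
  have hcard : #s = p := by simp [s, Fin.card_filter_val_lt]; omega
  have hs : s.Nonempty := ⟨_, hmem ⟨0, by omega⟩ (show 0 < p by omega)⟩
  have hsc : sᶜ.Nonempty := ⟨⟨p, by omega⟩, by simp [s]⟩
  have hH : (Fintype.card (Fin n) : ℝ) ^ 2 * H ^ 2 = ∑ α, (shapeMatrix A e α).trace ^ 2 := by
    simpa [trace_shapeMatrix] using hHdef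
  have hRic' : ∀ i, ((Fintype.card (Fin n) : ℝ) - 2) * (c + H ^ 2)
      ≤ gaussRicci c (shapeMatrix A e) i := fun i => by
    rw [Fintype.card_fin, ← RicCurv_eq_gaussRicci]
    exact hRic _ (e.orthonormal.1 i)
  have hΘ : lawsonSimons (shapeMatrix A e) s = #s * #sᶜ * c := by
    rw [← Theta_eq_lawsonSimons, heq, card_compl, hcard, Fintype.card_fin, Nat.cast_sub (by omega)]
  intro α
  have hblock := block_eq_smul_one_of_card_mul_le hs (card_mul_blockNormSq_eq_sq_blockTrace
    (fun β => shapeMatrix_isSymm e (hsymm β)) hs hsc (by simpa using hn) hH hRic' hΘ α).le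
  have hdiag : ∀ i : Fin n, (i : ℕ) < p →
      ⟪A α (e i), e i⟫ = blockTrace (shapeMatrix A e α) s / #s := fun i hi => by
    simpa [shapeMatrix] using hblock i (hmem i hi) i (hmem i hi)
  refine ⟨fun i hi => ?_, fun i i' hi hi' hne => ?_⟩
  · rw [hdiag i hi, hdiag _ (show 0 < p by omega)]
  · simpa [shapeMatrix, hne] using hblock i (hmem i hi) i' (hmem i' hi')
end

section
/- Let V, A_1,…,A_m, c, H, Ric, Θ_p be as in the setting, with n = dim V = 4 and p = 2. Assume Ric(X) ≥ 2(c+H²) for every unit vector X ∈ V, and that for some orthonormal basis e_1, e_2, e_3, e_4 of V equality Θ_2 = 4c holds. Then for every α ∈ {1,…,m}: ⟨A_α e_1, e_1⟩ = ⟨A_α e_2, e_2⟩, ⟨A_α e_1, e_2⟩ = 0, ⟨A_α e_3, e_3⟩ = ⟨A_α e_4, e_4⟩ and ⟨A_α e_3, e_4⟩ = 0; that is, the compression of each A_α to span{e_1,e_2} and to span{e_3,e_4} is a multiple of the identity. (Proposition 2, part (ii)(b).) -/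
open scoped RealInnerProductSpace

/-!
Sum the pinching `Ric ≥ 2(c + H²)` over the basis `e`: the left side is the scalar curvature
`12c + 16H² - S`, so `S ≤ 4c + 8H²`. For each symmetric `T` and `p = 2`, `n = 4`, the quantity
`2 tr(T²) - (tr T)² - 2 Θ_2(T)` is the sum of squares
`(h₁₁ - h₂₂)² + 4h₁₂² + (h₃₃ - h₄₄)² + 4h₃₄²`, where `hᵢⱼ = ⟨T eᵢ, eⱼ⟩`. Summed over `α` it equals
`2S - 16H² - 2Θ_2 = 2S - 16H² - 8c ≤ 0`, so every one of these squares vanishes.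
-/

open Finset

section
variable {V : Type*} [NormedAddCommGroup V] [InnerProductSpace ℝ V]

noncomputable def thetaOp {n : ℕ} (p : ℕ) (T : V →ₗ[ℝ] V) (e : OrthonormalBasis (Fin n) ℝ V) :
    ℝ :=
  ∑ i ∈ univ.filter (fun i : Fin n => (i : ℕ) < p),
    ∑ j ∈ univ.filter (fun j : Fin n => p ≤ (j : ℕ)),
      (2 * ⟪T (e i), e j⟫ ^ 2 - ⟪T (e i), e i⟫ * ⟪T (e j), e j⟫)

theorem theta_eq_sum_thetaOp {m n : ℕ} (p : ℕ) (A : Fin m → V →ₗ[ℝ] V)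
    (e : OrthonormalBasis (Fin n) ℝ V) :
    Theta m p A e = ∑ α, thetaOp p (A α) e := by
  simp only [Theta, thetaOp, mul_sum, ← sum_sub_distrib]
  exact (sum_congr rfl fun i _ => sum_comm).trans sum_comm

theorem trace_eq_sum_inner_apply_self {ι : Type*} [Fintype ι] (T : V →ₗ[ℝ] V)
    (e : OrthonormalBasis ι ℝ V) :
    LinearMap.trace ℝ V T = ∑ i, ⟪T (e i), e i⟫ := by
  simp only [LinearMap.trace_eq_sum_inner T e, real_inner_comm]

theorem sum_ricCurv_orthonormalBasis {m n : ℕ} (c : ℝ) (A : Fin m → V →ₗ[ℝ] V)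
    (e : OrthonormalBasis (Fin n) ℝ V) :
    ∑ i, RicCurv m n c A (e i) =
      n * (n - 1) * c + ∑ α, LinearMap.trace ℝ V (A α) ^ 2 - ∑ α, ∑ i, ‖A α (e i)‖ ^ 2 := by
  simp only [RicCurv, sum_add_distrib, sum_sub_distrib, sum_const, card_univ, Fintype.card_fin,
    nsmul_eq_mul]
  rw [sum_comm (γ := Fin n), sum_comm (γ := Fin n) (f := fun i α => ‖A α (e i)‖ ^ 2)]
  simp only [← mul_sum, ← trace_eq_sum_inner_apply_self, sq]
  ring

/-- Twice the sum of the squared Hilbert–Schmidt distances of the compressions of `T` to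
`span {e 0, e 1}` and `span {e 2, e 3}` from multiples of the identity. -/
noncomputable def blockDefect (T : V →ₗ[ℝ] V) (e : OrthonormalBasis (Fin 4) ℝ V) : ℝ :=
  (⟪T (e 0), e 0⟫ - ⟪T (e 1), e 1⟫) ^ 2 + 4 * ⟪T (e 0), e 1⟫ ^ 2
    + (⟪T (e 2), e 2⟫ - ⟪T (e 3), e 3⟫) ^ 2 + 4 * ⟪T (e 2), e 3⟫ ^ 2

theorem blockDefect_nonneg (T : V →ₗ[ℝ] V) (e : OrthonormalBasis (Fin 4) ℝ V) :
    0 ≤ blockDefect T e := by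
  unfold blockDefect
  positivity

theorem blockDefect_eq_zero_iff (T : V →ₗ[ℝ] V) (e : OrthonormalBasis (Fin 4) ℝ V) :
    blockDefect T e = 0 ↔
      ⟪T (e 0), e 0⟫ = ⟪T (e 1), e 1⟫ ∧ ⟪T (e 0), e 1⟫ = 0 ∧
      ⟪T (e 2), e 2⟫ = ⟪T (e 3), e 3⟫ ∧ ⟪T (e 2), e 3⟫ = 0 := by
  simp only [blockDefect]
  constructor
  · intro h
    refine ⟨?_, ?_, ?_, ?_⟩ <;>
      nlinarith [sq_nonneg (⟪T (e 0), e 0⟫ - ⟪T (e 1), e 1⟫), sq_nonneg ⟪T (e 0), e 1⟫,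
        sq_nonneg (⟪T (e 2), e 2⟫ - ⟪T (e 3), e 3⟫), sq_nonneg ⟪T (e 2), e 3⟫]
  · rintro ⟨h₀₁, h₀₁', h₂₃, h₂₃'⟩
    simp [h₀₁, h₀₁', h₂₃, h₂₃']

theorem blockDefect_eq {T : V →ₗ[ℝ] V} (hT : T.IsSymmetric) (e : OrthonormalBasis (Fin 4) ℝ V) :
    blockDefect T e =
      2 * ∑ i, ‖T (e i)‖ ^ 2 - LinearMap.trace ℝ V T ^ 2 - 2 * thetaOp 2 T e := by
  have hsymm : ∀ i j, ⟪T (e j), e i⟫ = ⟪T (e i), e j⟫ := fun i j => by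
    rw [hT, real_inner_comm]
  have hlow : univ.filter (fun i : Fin 4 => (i : ℕ) < 2) = {0, 1} := by decide
  have hhigh : univ.filter (fun j : Fin 4 => 2 ≤ (j : ℕ)) = {2, 3} := by decide
  simp only [blockDefect, thetaOp, hlow, hhigh, ← e.sum_sq_inner_left,
    trace_eq_sum_inner_apply_self T e, Fin.sum_univ_four,
    sum_pair (show (0 : Fin 4) ≠ 1 by decide), sum_pair (show (2 : Fin 4) ≠ 3 by decide),
    hsymm 0 1, hsymm 0 2, hsymm 0 3, hsymm 1 2, hsymm 1 3, hsymm 2 3]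
  ring

end

theorem ricci_pinched_equality_dim_four_general {V : Type*} [NormedAddCommGroup V]
    [InnerProductSpace ℝ V] (m : ℕ)
    (A : Fin m → V →ₗ[ℝ] V) (hsymm : ∀ α : Fin m, (A α).IsSymmetric)
    (c H : ℝ)
    (hHdef : (4 : ℝ) ^ 2 * H ^ 2 = ∑ α : Fin m, (LinearMap.trace ℝ V (A α)) ^ 2)
    (hRic : ∀ X : V, ‖X‖ = 1 → RicCurv m 4 c A X ≥ 2 * (c + H ^ 2))
    (e : OrthonormalBasis (Fin 4) ℝ V)
    (heq : Theta m 2 A e = 4 * c) :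
    ∀ α : Fin m,
      ⟪(A α) (e 0), e 0⟫ = ⟪(A α) (e 1), e 1⟫ ∧
      ⟪(A α) (e 0), e 1⟫ = 0 ∧
      ⟪(A α) (e 2), e 2⟫ = ⟪(A α) (e 3), e 3⟫ ∧
      ⟪(A α) (e 2), e 3⟫ = 0 := by
  have hRic_sum : ∑ _i : Fin 4, 2 * (c + H ^ 2) ≤ ∑ i, RicCurv m 4 c A (e i) :=
    sum_le_sum fun i _ => hRic (e i) (e.orthonormal.1 i)
  have hdefect_sum : ∑ α, blockDefect (A α) e =
      2 * ∑ α, ∑ i, ‖A α (e i)‖ ^ 2 - ∑ α, LinearMap.trace ℝ V (A α) ^ 2 - 2 * Theta m 2 A e := by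
    simp only [blockDefect_eq (hsymm _), theta_eq_sum_thetaOp, sum_sub_distrib, mul_sum]
  have hle : ∑ α, blockDefect (A α) e ≤ 0 := by
    rw [sum_ricCurv_orthonormalBasis, sum_const, card_univ, Fintype.card_fin, nsmul_eq_mul]
      at hRic_sum
    push_cast at hRic_sum
    linarith
  intro α
  rw [← blockDefect_eq_zero_iff]
  exact (sum_eq_zero_iff_of_nonneg fun β _ => blockDefect_nonneg (A β) e).1
    (le_antisymm hle (sum_nonneg fun β _ => blockDefect_nonneg (A β) e)) α (mem_univ α)

theorem ricci_pinched_equality_dim_four {V : Type*} [NormedAddCommGroup V]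
    [InnerProductSpace ℝ V] [FiniteDimensional ℝ V] (m : ℕ)
    (hdim : Module.finrank ℝ V = 4)
    (A : Fin m → V →ₗ[ℝ] V) (hsymm : ∀ α : Fin m, (A α).IsSymmetric)
    (c H : ℝ) (hH : 0 ≤ H)
    (hHdef : (4 : ℝ) ^ 2 * H ^ 2 = ∑ α : Fin m, (LinearMap.trace ℝ V (A α)) ^ 2)
    (hRic : ∀ X : V, ‖X‖ = 1 → RicCurv m 4 c A X ≥ 2 * (c + H ^ 2))
    (e : OrthonormalBasis (Fin 4) ℝ V)
    (heq : Theta m 2 A e = 4 * c) :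
    ∀ α : Fin m,
      ⟪(A α) (e 0), e 0⟫ = ⟪(A α) (e 1), e 1⟫ ∧
      ⟪(A α) (e 0), e 1⟫ = 0 ∧
      ⟪(A α) (e 2), e 2⟫ = ⟪(A α) (e 3), e 3⟫ ∧
      ⟪(A α) (e 2), e 3⟫ = 0 :=
  ricci_pinched_equality_dim_four_general m A hsymm c H hHdef hRic e heq
end
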